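/- If X = Y XOR Z with Y, Z independent uniform bits, then \widetilde{CI}((X,Y,Z):Y;Z) = \widetilde{CI}((Y,Z):Y;Z) = 0 < 1 = \widetilde{CI}(X:Y;Z); hence \widetilde{CI} violates left monotonicity. -/

import Mathlib

open scoped BigOperators Classical

noncomputable section

/-- Shannon entropy (in bits) of a distribution on a finite type. -/
def ent {A : Type*} [Fintype A] (q : A → ℝ) : ℝ :=
  -∑ a, q a * Real.logb 2 (q a)

def ent2 {A B : Type*} [Fintype A] [Fintype B] (q : A → B → ℝ) : ℝ :=
  ent (fun p : A × B => q p.1 p.2)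

def ent3 {A B C : Type*} [Fintype A] [Fintype B] [Fintype C] (q : A → B → C → ℝ) : ℝ :=
  ent (fun p : A × B × C => q p.1 p.2.1 p.2.2)

/-- Mutual information MI(A:B) (in bits) of a joint distribution `q`. -/
def MI {A B : Type*} [Fintype A] [Fintype B] (q : A → B → ℝ) : ℝ :=
  ent (fun a => ∑ b, q a b) + ent (fun b => ∑ a, q a b) - ent2 q

/-- Conditional mutual information MI(A:B|C) of a joint distribution `q` of (A,B,C):
`MI(A:B|C) = H(A,C) + H(B,C) - H(C) - H(A,B,C)`. -/
def CMI {A B C : Type*} [Fintype A] [Fintype B] [Fintype C] (q : A → B → C → ℝ) : ℝ :=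
  ent2 (fun a c => ∑ b, q a b c) + ent2 (fun b c => ∑ a, q a b c)
    - ent (fun c => ∑ a, ∑ b, q a b c) - ent3 q

/-- Coinformation CoI(A;B;C) = MI(A:B) - MI(A:B|C). -/
def CoI {A B C : Type*} [Fintype A] [Fintype B] [Fintype C] (q : A → B → C → ℝ) : ℝ :=
  MI (fun a b => ∑ c, q a b c) - CMI q

structure IsDist2 {A B : Type*} [Fintype A] [Fintype B] (q : A → B → ℝ) : Prop where
  nonneg : ∀ a b, 0 ≤ q a b
  sum_one : ∑ a, ∑ b, q a b = 1

structure IsDist3 {A B C : Type*} [Fintype A] [Fintype B] [Fintype C]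
    (q : A → B → C → ℝ) : Prop where
  nonneg : ∀ a b c, 0 ≤ q a b c
  sum_one : ∑ a, ∑ b, ∑ c, q a b c = 1

structure IsDist4 {A B C D : Type*} [Fintype A] [Fintype B] [Fintype C] [Fintype D]
    (q : A → B → C → D → ℝ) : Prop where
  nonneg : ∀ a b c d, 0 ≤ q a b c d
  sum_one : ∑ a, ∑ b, ∑ c, ∑ d, q a b c d = 1

structure IsDist5 {A B C D E : Type*} [Fintype A] [Fintype B] [Fintype C] [Fintype D] [Fintype E]
    (q : A → B → C → D → E → ℝ) : Prop where
  nonneg : ∀ a b c d e, 0 ≤ q a b c d e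
  sum_one : ∑ a, ∑ b, ∑ c, ∑ d, ∑ e, q a b c d e = 1

/-- Δ_P: the joint distributions of (X,Y,Z) having the same (X,Y)- and (X,Z)-marginals as P. -/
def Delta {A B C : Type*} [Fintype A] [Fintype B] [Fintype C] (p : A → B → C → ℝ) :
    Set (A → B → C → ℝ) :=
  {q | IsDist3 q ∧ (∀ a b, ∑ c, q a b c = ∑ c, p a b c)
      ∧ (∀ a c, ∑ b, q a b c = ∑ b, p a b c)}

/-- MI(X:(Y,Z)). -/
def MIpair {A B C : Type*} [Fintype A] [Fintype B] [Fintype C] (q : A → B → C → ℝ) : ℝ :=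
  MI (fun a (p : B × C) => q a p.1 p.2)

/-- The unique information UI~(X : Y \ Z) = min over Δ_P of MI_Q(X:Y|Z). -/
def UI {A B C : Type*} [Fintype A] [Fintype B] [Fintype C] (p : A → B → C → ℝ) : ℝ :=
  sInf (CMI '' Delta p)

/-- The unique information UI~(X : Z \ Y) = min over Δ_P of MI_Q(X:Z|Y). -/
def UIr {A B C : Type*} [Fintype A] [Fintype B] [Fintype C] (p : A → B → C → ℝ) : ℝ :=
  sInf ((fun q => CMI (fun a c b => q a b c)) '' Delta p)

/-- The shared information SI~(X : Y ; Z) = max over Δ_P of CoI_Q(X;Y;Z). -/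
def SI {A B C : Type*} [Fintype A] [Fintype B] [Fintype C] (p : A → B → C → ℝ) : ℝ :=
  sSup (CoI '' Delta p)

/-- The complementary information CI~(X : Y ; Z) = MI_P(X:(Y,Z)) - min over Δ_P of MI_Q(X:(Y,Z)). -/
def CI {A B C : Type*} [Fintype A] [Fintype B] [Fintype C] (p : A → B → C → ℝ) : ℝ :=
  MIpair p - sInf (MIpair '' Delta p)

/-- The joint distribution of (X,Y,Z) with Y, Z independent uniform bits and `X = Y XOR Z`. -/
def pXor : Bool → Bool → Bool → ℝ := fun x y z => if x = xor y z then 1/4 else 0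

/-- The joint distribution of ((X,Y,Z),Y,Z) for the XOR example. -/
def pXorTriple : (Bool × Bool × Bool) → Bool → Bool → ℝ :=
  fun t y z => if t = (xor y z, y, z) then 1/4 else 0

/-- The joint distribution of ((Y,Z),Y,Z) for Y, Z independent uniform bits. -/
def pPairUnif : (Bool × Bool) → Bool → Bool → ℝ :=
  fun t y z => if t = (y, z) then 1/4 else 0


/-! ### Auxiliary lemmas -/

lemma logb_two_zpow (n : ℤ) : Real.logb 2 (2^n) = n := by
  rw [Real.logb, Real.log_zpow, mul_div_assoc, Real.log_div_log, Real.logb_self_eq_one] <;>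
    norm_num

lemma lhalf : Real.logb 2 (1/2 : ℝ) = -1 := by
  have : (1/2:ℝ) = 2^(-1:ℤ) := by norm_num
  rw [this, logb_two_zpow]; norm_num

lemma lquarter : Real.logb 2 (1/4 : ℝ) = -2 := by
  have : (1/4:ℝ) = 2^(-2:ℤ) := by norm_num
  rw [this, logb_two_zpow]; norm_num

lemma leighth : Real.logb 2 (1/8 : ℝ) = -3 := by
  have : (1/8:ℝ) = 2^(-3:ℤ) := by norm_num
  rw [this, logb_two_zpow]; norm_num

/-- Gibbs' inequality: mutual information of a distribution is nonnegative. -/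
lemma MI_nonneg {A B : Type*} [Fintype A] [Fintype B] (q : A → B → ℝ)
    (hnn : ∀ a b, 0 ≤ q a b) (hsum : ∑ a, ∑ b, q a b = 1) : 0 ≤ MI q := by
  set q1 : A → ℝ := fun a => ∑ b, q a b with hq1
  set q2 : B → ℝ := fun b => ∑ a, q a b with hq2
  have hq1n : ∀ a, 0 ≤ q1 a := fun a => Finset.sum_nonneg fun b _ => hnn a b
  have hq2n : ∀ b, 0 ≤ q2 b := fun b => Finset.sum_nonneg fun a _ => hnn a b
  have hlog2 : (0:ℝ) < Real.log 2 := Real.log_pos (by norm_num)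
  have key : ∀ a b, (q a b - q1 a * q2 b) / Real.log 2 ≤
      q a b * Real.logb 2 (q a b) - q a b * Real.logb 2 (q1 a) - q a b * Real.logb 2 (q2 b) := by
    intro a b
    rcases eq_or_lt_of_le (hnn a b) with h | h
    · rw [← h]
      simp only [zero_mul, zero_sub, sub_zero, zero_sub, neg_nonpos]
      have : 0 ≤ q1 a * q2 b := mul_nonneg (hq1n a) (hq2n b)
      rw [div_le_iff₀ hlog2]
      nlinarith
    · have h1 : 0 < q1 a := lt_of_lt_of_le h
        (Finset.single_le_sum (f := q a) (fun b _ => hnn a b) (Finset.mem_univ b))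
      have h2 : 0 < q2 b := lt_of_lt_of_le h
        (Finset.single_le_sum (f := fun a => q a b) (fun a _ => hnn a b) (Finset.mem_univ a))
      have hx : Real.log (q1 a * q2 b / q a b) ≤ q1 a * q2 b / q a b - 1 :=
        Real.log_le_sub_one_of_pos (by positivity)
      have e : q a b * Real.logb 2 (q a b) - q a b * Real.logb 2 (q1 a)
            - q a b * Real.logb 2 (q2 b)
          = q a b * (-(Real.log (q1 a * q2 b / q a b))) / Real.log 2 := by
        rw [Real.log_div (by positivity) h.ne', Real.log_mul h1.ne' h2.ne',
          Real.logb, Real.logb, Real.logb]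
        ring
      rw [e, div_le_div_iff_of_pos_right hlog2]
      have hq : q a b * (q1 a * q2 b / q a b) = q1 a * q2 b := by field_simp
      nlinarith
  have expand : MI q = ∑ a, ∑ b, (q a b * Real.logb 2 (q a b)
      - q a b * Real.logb 2 (q1 a) - q a b * Real.logb 2 (q2 b)) := by
    have e1 : ∀ a, q1 a * Real.logb 2 (q1 a) = ∑ b, q a b * Real.logb 2 (q1 a) := fun a => by
      rw [← Finset.sum_mul]
    have e2 : ∀ b, q2 b * Real.logb 2 (q2 b) = ∑ a, q a b * Real.logb 2 (q2 b) := fun b => by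
      rw [← Finset.sum_mul]
    unfold MI ent2 ent
    rw [Fintype.sum_prod_type]
    change -∑ x, q1 x * Real.logb 2 (q1 x) + -∑ x, q2 x * Real.logb 2 (q2 x) -
      -∑ x, ∑ x_1, q x x_1 * Real.logb 2 (q x x_1) = _
    simp only [e1, e2]
    have comm : (∑ x : B, ∑ a : A, q a x * Real.logb 2 (q2 x))
        = ∑ a : A, ∑ x : B, q a x * Real.logb 2 (q2 x) := Finset.sum_comm
    rw [comm]
    simp only [Finset.sum_sub_distrib]
    ring
  have sumrhs : ∑ a, ∑ b, (q a b - q1 a * q2 b) / Real.log 2 = 0 := by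
    have h1 : ∑ a, q1 a = 1 := hsum
    have h2 : ∑ b, q2 b = 1 := by
      rw [← hsum]; exact Finset.sum_comm
    have hz : ∑ a, ∑ b, (q a b - q1 a * q2 b) = 0 := by
      simp only [Finset.sum_sub_distrib, ← Finset.mul_sum]
      rw [h2]
      simp only [mul_one]
      norm_num
      exact sub_eq_zero.mpr rfl
    simp only [← Finset.sum_div]
    rw [hz, zero_div]
  rw [expand, ← sumrhs]
  exact Finset.sum_le_sum fun a _ => Finset.sum_le_sum fun b _ => key a b

lemma slice_unique (q : Bool → Bool → ℝ) (nn : ∀ y z, 0 ≤ q y z) (y0 z0 : Bool) (v : ℝ)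
    (hr : ∀ y, q y false + q y true = if y = y0 then v else 0)
    (hc : ∀ z, q false z + q true z = if z = z0 then v else 0) :
    ∀ y z, q y z = if y = y0 ∧ z = z0 then v else 0 := by
  have h1 := hr false; have h2 := hr true; have h3 := hc false; have h4 := hc true
  have n1 := nn false false; have n2 := nn false true
  have n3 := nn true false; have n4 := nn true true
  intro y z
  cases y0 <;> cases z0 <;> cases y <;> cases z <;> simp_all <;> linarith

lemma delta_eq {A : Type*} [Fintype A] (p : A → Bool → Bool → ℝ) (hp : IsDist3 p)
    (hform : ∀ t, ∃ y0 z0 v, ∀ y z, p t y z = if y = y0 ∧ z = z0 then v else 0) :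
    Delta p = {p} := by
  ext q
  constructor
  · rintro ⟨⟨hnn, _⟩, h1, h2⟩
    funext t y z
    obtain ⟨y0, z0, v, hpf⟩ := hform t
    have hr : ∀ y, q t y false + q t y true = if y = y0 then v else 0 := by
      intro y
      have := h1 t y
      rw [Fintype.sum_bool, Fintype.sum_bool] at this
      rw [add_comm, this, hpf, hpf]
      cases z0 <;> by_cases hy : y = y0 <;> simp [hy]
    have hc : ∀ z, q t false z + q t true z = if z = z0 then v else 0 := by
      intro z
      have := h2 t z
      rw [Fintype.sum_bool, Fintype.sum_bool] at this
      rw [add_comm, this, hpf, hpf]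
      cases y0 <;> by_cases hz : z = z0 <;> simp [hz]
    rw [slice_unique (q t) (hnn t) y0 z0 v hr hc y z, hpf]
  · rintro rfl
    exact ⟨hp, fun _ _ => rfl, fun _ _ => rfl⟩

lemma hform_triple : ∀ t, ∃ y0 z0 v, ∀ y z,
    pXorTriple t y z = if y = y0 ∧ z = z0 then v else 0 := by
  rintro ⟨x, y0, z0⟩
  exact ⟨y0, z0, if x = xor y0 z0 then 1/4 else 0, by
    intro y z
    simp only [pXorTriple, Prod.mk.injEq]
    by_cases hy : y = y0 <;> by_cases hz : z = z0 <;> by_cases hx : x = xor y z <;>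
      simp_all [eq_comm]⟩

lemma hform_pair : ∀ t, ∃ y0 z0 v, ∀ y z,
    pPairUnif t y z = if y = y0 ∧ z = z0 then v else 0 := by
  rintro ⟨y0, z0⟩
  exact ⟨y0, z0, 1/4, by
    intro y z
    simp only [pPairUnif, Prod.mk.injEq]
    by_cases hy : y = y0 <;> by_cases hz : z = z0 <;> simp_all [eq_comm]⟩

lemma dist_triple : IsDist3 pXorTriple := by
  constructor
  · intro a b c; unfold pXorTriple; positivity
  · rw [Fintype.sum_prod_type]
    simp [Fintype.sum_prod_type, Fintype.sum_bool, pXorTriple, Prod.ext_iff]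
    norm_num

lemma dist_pair : IsDist3 pPairUnif := by
  constructor
  · intro a b c; unfold pPairUnif; positivity
  · rw [Fintype.sum_prod_type]
    simp [Fintype.sum_bool, pPairUnif, Prod.ext_iff]
    norm_num

lemma CI_of_delta_singleton {A : Type*} [Fintype A] (p : A → Bool → Bool → ℝ)
    (h : Delta p = {p}) : CI p = 0 := by
  unfold CI
  rw [h, Set.image_singleton, csInf_singleton, sub_self]

lemma MIpair_pXor : MIpair pXor = 1 := by
  unfold MIpair MI ent2 ent
  rw [Fintype.sum_prod_type]
  simp only [Fintype.sum_prod_type, Fintype.sum_bool, pXor]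
  norm_num [lhalf, lquarter]

def qUnif : Bool → Bool → Bool → ℝ := fun _ _ _ => 1/8

lemma MIpair_qUnif : MIpair qUnif = 0 := by
  unfold MIpair MI ent2 ent
  rw [Fintype.sum_prod_type]
  simp only [Fintype.sum_prod_type, Fintype.sum_bool, qUnif]
  norm_num [lhalf, lquarter, leighth]

lemma qUnif_mem : qUnif ∈ Delta pXor := by
  refine ⟨⟨fun _ _ _ => by norm_num [qUnif], ?_⟩, ?_, ?_⟩
  · simp [Fintype.sum_bool, qUnif]; norm_num
  · intro a b
    rw [Fintype.sum_bool, Fintype.sum_bool]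
    cases a <;> cases b <;> simp [pXor, qUnif] <;> norm_num
  · intro a c
    rw [Fintype.sum_bool, Fintype.sum_bool]
    cases a <;> cases c <;> simp [pXor, qUnif] <;> norm_num

lemma MIpair_nonneg {A B C : Type*} [Fintype A] [Fintype B] [Fintype C]
    (q : A → B → C → ℝ) (hq : IsDist3 q) : 0 ≤ MIpair q := by
  apply MI_nonneg
  · exact fun a p => hq.nonneg a p.1 p.2
  · have := hq.sum_one
    simp only [Fintype.sum_prod_type]
    exact this

lemma sInf_pXor : sInf (MIpair '' Delta pXor) = 0 := by
  have hlb : ∀ r ∈ MIpair '' Delta pXor, (0:ℝ) ≤ r := by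
    rintro r ⟨q, hq, rfl⟩
    exact MIpair_nonneg q hq.1
  refine le_antisymm ?_ (le_csInf ⟨MIpair qUnif, qUnif, qUnif_mem, rfl⟩ hlb)
  have : (0:ℝ) ∈ MIpair '' Delta pXor := ⟨qUnif, qUnif_mem, MIpair_qUnif⟩
  exact csInf_le ⟨0, hlb⟩ this

lemma CI_pXor : CI pXor = 1 := by
  unfold CI
  rw [sInf_pXor, MIpair_pXor, sub_zero]

/-- if `X = Y XOR Z` with Y, Z independent uniform bits, then
`CI~((X,Y,Z):Y;Z) = CI~((Y,Z):Y;Z) = 0 < 1 = CI~(X:Y;Z)`; hence `CI~` violates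
left monotonicity. -/
theorem CI_xor_example_left :
    CI pXorTriple = 0 ∧ CI pPairUnif = 0 ∧ CI pXor = 1 ∧ CI pXorTriple < CI pXor := by
  have h1 : CI pXorTriple = 0 := CI_of_delta_singleton _ (delta_eq _ dist_triple hform_triple)
  have h2 : CI pPairUnif = 0 := CI_of_delta_singleton _ (delta_eq _ dist_pair hform_pair)
  refine ⟨h1, h2, CI_pXor, ?_⟩
  rw [h1, CI_pXor]
  norm_num

end
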